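/- arXiv:0903.4923 — 2 statements merged into one kernel-verified Lean document; each statement's English description precedes it below -/
import Mathlib

section
/- Let f : [-1,1] → ℝ be continuous and strictly convex on [m, m+δ₀], differentiable at m, with m ∈ (-1,1). Define R(a,b) := (f(m+a)−f(m+b))/(a−b) for a ≠ b and R(a,a) := f'(m+a), and C(a,b) := (|a−b|/2)(f(m+a)+f(m+b)) − |∫_{m+b}^{m+a} f(v) dv| appropriately signed, i.e. for a > b, C(a,b) := ((a−b)/2)(f(m+a)+f(m+b)) − ∫_{m+b}^{m+a} f(v) dv. If additionally f ∈ C²([-1,1]), then lim_{δ₁↓0} lim_{δ₂↓0} lim_{δ↓0} sup_{δ',δ'' ∈ [−δ,δ]} (|C(δ₁,δ')| + |C(δ'',−δ₂)| + |C(δ₁,−δ₂)|) / (R(δ₁,0) − f'(m)) = 0. -/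
/-!
The cost `C` of the paper is Mathlib's one-trapezoid error `trapezoidal_error f 1`, which is
jointly continuous in the endpoints. The inner limits therefore replace the sum by
`2 C(m, m + δ₁)`, the middle term tending to `C(m, m) = 0`. On `[m, m + δ₁]` the graph of `f`
lies below its chord and above its tangent at `m`, whence
`0 ≤ C(m, m + δ₁) ≤ δ₁² / 2 · (R(δ₁, 0) - f'(m))`, and strict convexity makes
`R(δ₁, 0) - f'(m)` positive, so the ratio is at most `δ₁²`.
-/

open Set MeasureTheory

lemma trapezoidal_error_one (f : ℝ → ℝ) (a b : ℝ) :
    trapezoidal_error f 1 a b = (b - a) / 2 * (f a + f b) - ∫ x in a..b, f x := by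
  simp [trapezoidal_error]

lemma trapezoidal_error_one_of_sub_eq (f : ℝ → ℝ) {a b h : ℝ} (hab : b - a = h) :
    h / 2 * (f b + f a) - ∫ x in a..b, f x = trapezoidal_error f 1 a b := by
  rw [trapezoidal_error_one, ← hab, add_comm]

lemma integral_const_add_mul_sub (c k a b : ℝ) :
    ∫ x in a..b, (c + k * (x - a)) = (b - a) * c + k * (b - a) ^ 2 / 2 := by
  rw [intervalIntegral.integral_add intervalIntegrable_const
      (by apply Continuous.intervalIntegrable; fun_prop),
    intervalIntegral.integral_const_mul, intervalIntegral.integral_comp_sub_right (fun x => x)]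
  simp only [intervalIntegral.integral_const, smul_eq_mul, sub_self, integral_id]
  ring

/-- The trapezoid rule is exact on affine functions, so only the deviation of `f` from the line
through `(a, f a)` of slope `k` contributes. -/
lemma trapezoidal_error_one_eq_sub_integral {f : ℝ → ℝ} {a b : ℝ}
    (hf : IntervalIntegrable f volume a b) (k : ℝ) :
    trapezoidal_error f 1 a b =
      (b - a) ^ 2 / 2 * (slope f a b - k) - ∫ x in a..b, (f x - (f a + k * (x - a))) := by
  have hslope : (b - a) * slope f a b = f b - f a := sub_smul_slope f a b
  rw [trapezoidal_error_one, intervalIntegral.integral_sub hf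
    (by apply Continuous.intervalIntegrable; fun_prop), integral_const_add_mul_sub]
  linear_combination -(b - a) / 2 * hslope

lemma ConvexOn.le_add_slope_mul_sub {f : ℝ → ℝ} {a b x : ℝ} (hfc : ConvexOn ℝ (Icc a b) f)
    (hx : x ∈ Icc a b) : f x ≤ f a + slope f a b * (x - a) := by
  rcases hx.1.eq_or_lt with rfl | hax
  · simp
  have hb : b ∈ Icc a b \ {a} := ⟨right_mem_Icc.2 (hx.1.trans hx.2), (hax.trans_le hx.2).ne'⟩
  have hslope := hfc.slope_mono (left_mem_Icc.2 (hx.1.trans hx.2)) ⟨hx, hax.ne'⟩ hb hx.2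
  have hx' : (x - a) * slope f a x = f x - f a := sub_smul_slope f a x
  nlinarith

lemma ConvexOn.add_mul_sub_le_of_hasDerivAt {f : ℝ → ℝ} {S : Set ℝ} {a x f' : ℝ}
    (hfc : ConvexOn ℝ S f) (ha : a ∈ S) (hx : x ∈ S) (hax : a ≤ x) (hf' : HasDerivAt f f' a) :
    f a + f' * (x - a) ≤ f x := by
  rcases hax.eq_or_lt with rfl | hax
  · simp
  have hslope := hfc.le_slope_of_hasDerivAt ha hx hax hf'
  have hx' : (x - a) * slope f a x = f x - f a := sub_smul_slope f a x
  nlinarith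

lemma ConvexOn.trapezoidal_error_one_nonneg {f : ℝ → ℝ} {a b : ℝ}
    (hfc : ConvexOn ℝ (Icc a b) f) (hab : a ≤ b) (hf : IntervalIntegrable f volume a b) :
    0 ≤ trapezoidal_error f 1 a b := by
  rw [trapezoidal_error_one_eq_sub_integral hf (slope f a b), sub_self, mul_zero, zero_sub,
    neg_nonneg, ← neg_nonneg, ← intervalIntegral.integral_neg]
  exact intervalIntegral.integral_nonneg hab fun x hx => by
    linarith [hfc.le_add_slope_mul_sub hx]

lemma ConvexOn.trapezoidal_error_one_le_of_hasDerivAt {f : ℝ → ℝ} {a b f' : ℝ}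
    (hfc : ConvexOn ℝ (Icc a b) f) (hab : a ≤ b) (hf : IntervalIntegrable f volume a b)
    (hf' : HasDerivAt f f' a) :
    trapezoidal_error f 1 a b ≤ (b - a) ^ 2 / 2 * (slope f a b - f') := by
  rw [trapezoidal_error_one_eq_sub_integral hf f', sub_le_self_iff]
  refine intervalIntegral.integral_nonneg hab fun x hx => ?_
  linarith [hfc.add_mul_sub_le_of_hasDerivAt (left_mem_Icc.2 hab) hx hx.1 hf']

lemma ConvexOn.abs_trapezoidal_error_one_le_of_hasDerivAt {f : ℝ → ℝ} {a b f' : ℝ}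
    (hfc : ConvexOn ℝ (Icc a b) f) (hab : a ≤ b) (hf : IntervalIntegrable f volume a b)
    (hf' : HasDerivAt f f' a) :
    |trapezoidal_error f 1 a b| ≤ (b - a) ^ 2 / 2 * (slope f a b - f') := by
  rw [abs_of_nonneg (hfc.trapezoidal_error_one_nonneg hab hf)]
  exact hfc.trapezoidal_error_one_le_of_hasDerivAt hab hf hf'

lemma ContinuousOn.continuousAt_trapezoidal_error_one {f : ℝ → ℝ} {s t x y : ℝ}
    (hf : ContinuousOn f (Icc s t)) (hx : x ∈ Ioo s t) (hy : y ∈ Ioo s t) :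
    ContinuousAt (Function.uncurry (trapezoidal_error f 1)) (x, y) := by
  have hst : s ≤ t := hx.1.le.trans hx.2.le
  have hF : ContinuousOn (fun u => ∫ v in s..u, f v) (Icc s t) := by
    simpa [uIcc_of_le hst] using intervalIntegral.continuousOn_primitive_interval'
      (hf.intervalIntegrable_of_Icc hst) (left_mem_uIcc (a := s) (b := t))
  have hfst : MapsTo Prod.fst (Icc s t ×ˢ Icc s t) (Icc s t) := fun p hp => hp.1
  have hsnd : MapsTo Prod.snd (Icc s t ×ˢ Icc s t) (Icc s t) := fun p hp => hp.2
  have hcont : ContinuousOn (fun p : ℝ × ℝ => (p.2 - p.1) / 2 * (f p.1 + f p.2) -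
      ((∫ v in s..p.2, f v) - ∫ v in s..p.1, f v)) (Icc s t ×ˢ Icc s t) := by
    have h1 := hf.comp continuousOn_fst hfst
    have h2 := hf.comp continuousOn_snd hsnd
    have h3 := hF.comp continuousOn_fst hfst
    have h4 := hF.comp continuousOn_snd hsnd
    exact ((continuousOn_snd.sub continuousOn_fst).div_const 2 |>.mul (h1.add h2)).sub (h4.sub h3)
  have hint : ∀ u ∈ Icc s t, IntervalIntegrable f volume s u := fun u hu =>
    (hf.mono (uIcc_subset_Icc (left_mem_Icc.2 hst) hu)).intervalIntegrable
  refine (hcont.congr fun p hp => ?_).continuousAt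
    (prod_mem_nhds (Icc_mem_nhds hx.1 hx.2) (Icc_mem_nhds hy.1 hy.2))
  rw [Function.uncurry_apply_pair, trapezoidal_error_one,
    intervalIntegral.integral_interval_sub_left (hint _ hp.2) (hint _ hp.1)]

lemma exists_abs_add_abs_add_abs_lt_of_continuousAt {g : ℝ → ℝ → ℝ} {x y η : ℝ}
    (hgx : ContinuousAt (Function.uncurry g) (x, x))
    (hgy : ContinuousAt (Function.uncurry g) (x, y))
    (hg : g x x = 0) (hη : 0 < η) :
    ∃ r > 0, ∀ s t u, |s| < r → |t| < r → |u| < r →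
      |g (x + s) y| + |g (x - t) (x + u)| + |g (x - t) y| < 2 * |g x y| + 3 * η := by
  obtain ⟨r₀, hr₀, hx⟩ := Metric.continuousAt_iff.1 hgx η hη
  obtain ⟨r₁, hr₁, hy⟩ := Metric.continuousAt_iff.1 hgy η hη
  refine ⟨min r₀ r₁, lt_min hr₀ hr₁, fun s t u hs ht hu => ?_⟩
  rw [lt_min_iff] at hs ht hu
  have h₁ := @hy (x + s, y) (by simp [Prod.dist_eq, hs.2])
  have h₂ := @hx (x - t, x + u) (by simp [Prod.dist_eq, ht.1, hu.1])
  have h₃ := @hy (x - t, y) (by simp [Prod.dist_eq, ht.2])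
  simp only [Real.dist_eq, Function.uncurry_apply_pair, hg, sub_zero] at h₁ h₂ h₃
  linarith [abs_sub_abs_le_abs_sub (g (x + s) y) (g x y),
    abs_sub_abs_le_abs_sub (g (x - t) y) (g x y)]

theorem key_triple_limit_general
    (f : ℝ → ℝ) (m δ₀ : ℝ)
    (hsub : Icc (m - δ₀) (m + δ₀) ⊆ Ioo (-1:ℝ) 1)
    (hf : ContDiffOn ℝ 2 f (Icc (-1) 1))
    (hconv : StrictConvexOn ℝ (Icc m (m + δ₀)) f)
    (fm : ℝ) (hfm : HasDerivAt f fm m) :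
    ∀ ε > (0:ℝ), ∃ d₁ > (0:ℝ), ∀ δ₁, 0 < δ₁ → δ₁ < d₁ → δ₁ ≤ δ₀ →
      ∃ d₂ > (0:ℝ), ∀ δ₂, 0 < δ₂ → δ₂ < d₂ →
        ∃ d₃ > (0:ℝ), ∀ δ, 0 < δ → δ < d₃ →
          ∀ a ∈ Icc (-δ) δ, ∀ b ∈ Icc (-δ) δ,
            (|((δ₁ - a) / 2) * (f (m + δ₁) + f (m + a)) - ∫ v in (m + a)..(m + δ₁), f v| +
             |((b + δ₂) / 2) * (f (m + b) + f (m - δ₂)) - ∫ v in (m - δ₂)..(m + b), f v| +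
             |((δ₁ + δ₂) / 2) * (f (m + δ₁) + f (m - δ₂)) - ∫ v in (m - δ₂)..(m + δ₁), f v|)
              / ((f (m + δ₁) - f m) / δ₁ - fm) < ε := by
  intro ε hε
  refine ⟨min 1 (ε / 2), by positivity, fun δ₁ hδ₁ hδ₁d hδ₁δ₀ => ?_⟩
  have hm : m ∈ Ioo (-1) 1 := hsub ⟨by linarith, by linarith⟩
  have hm₁ : m + δ₁ ∈ Ioo (-1) 1 := hsub ⟨by linarith, by linarith⟩
  have hcont : ContinuousOn f (Icc (-1) 1) := hf.continuousOn
  have hconv₁ : StrictConvexOn ℝ (Icc m (m + δ₁)) f :=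
    hconv.subset (Icc_subset_Icc_right (by linarith)) (convex_Icc _ _)
  have hD := hconv₁.lt_slope_of_hasDerivAt (left_mem_Icc.2 (by linarith))
    (right_mem_Icc.2 (by linarith)) (by linarith) hfm
  have hC₀ := hconv₁.convexOn.abs_trapezoidal_error_one_le_of_hasDerivAt (by linarith)
    ((hcont.mono (Icc_subset_Icc hm.1.le hm₁.2.le)).intervalIntegrable_of_Icc (by linarith)) hfm
  simp only [slope_def_field, add_sub_cancel_left] at hD hC₀
  set D := (f (m + δ₁) - f m) / δ₁ - fm
  have hD : 0 < D := sub_pos.2 hD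
  obtain ⟨r, hr, hsum⟩ := exists_abs_add_abs_add_abs_lt_of_continuousAt
    (hcont.continuousAt_trapezoidal_error_one hm hm)
    (hcont.continuousAt_trapezoidal_error_one hm hm₁) (trapezoidal_error_eq f 1 m)
    (by positivity : 0 < D * ε / 8)
  refine ⟨r, hr, fun δ₂ hδ₂ hδ₂r => ⟨r, hr, fun δ hδ hδr a ha b hb => ?_⟩⟩
  have hsum := hsum a δ₂ b (abs_lt.2 ⟨by linarith [ha.1], by linarith [ha.2]⟩)
    (by rwa [abs_of_pos hδ₂]) (abs_lt.2 ⟨by linarith [hb.1], by linarith [hb.2]⟩)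
  rw [trapezoidal_error_one_of_sub_eq f (by ring : m + δ₁ - (m + a) = δ₁ - a),
    trapezoidal_error_one_of_sub_eq f (by ring : m + b - (m - δ₂) = b + δ₂),
    trapezoidal_error_one_of_sub_eq f (by ring : m + δ₁ - (m - δ₂) = δ₁ + δ₂), div_lt_iff₀ hD]
  have hδ₁ε : δ₁ ^ 2 < ε / 2 := by nlinarith [min_le_left 1 (ε / 2), min_le_right 1 (ε / 2)]
  linarith [mul_lt_mul_of_pos_left hδ₁ε hD, mul_pos hD hε]

/-- the key triple limit in the proof of Lemma 6. For `f ∈ C²([-1,1])`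
strictly convex on `[m,m+δ₀]` with derivative `fm` at `m`, setting
`R(δ₁,0) := (f(m+δ₁)−f(m))/δ₁` and
`C(a,b) := ((a−b)/2)(f(m+a)+f(m+b)) − ∫_{m+b}^{m+a} f(v) dv`, one has
`lim_{δ₁↓0} lim_{δ₂↓0} lim_{δ↓0} sup_{a,b ∈ [−δ,δ]}
  (|C(δ₁,a)| + |C(b,−δ₂)| + |C(δ₁,−δ₂)|) / (R(δ₁,0) − fm) = 0`,
expressed in `ε`–`δ` form. -/
theorem key_triple_limit
    (f : ℝ → ℝ) (m δ₀ : ℝ) (hm : m ∈ Ioo (-1:ℝ) 1) (hδ₀ : 0 < δ₀)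
    (hsub : Icc (m - δ₀) (m + δ₀) ⊆ Ioo (-1:ℝ) 1)
    (hf : ContDiffOn ℝ 2 f (Icc (-1) 1))
    (hconv : StrictConvexOn ℝ (Icc m (m + δ₀)) f)
    (fm : ℝ) (hfm : HasDerivAt f fm m) :
    ∀ ε > (0:ℝ), ∃ d₁ > (0:ℝ), ∀ δ₁, 0 < δ₁ → δ₁ < d₁ → δ₁ ≤ δ₀ →
      ∃ d₂ > (0:ℝ), ∀ δ₂, 0 < δ₂ → δ₂ < d₂ →
        ∃ d₃ > (0:ℝ), ∀ δ, 0 < δ → δ < d₃ →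
          ∀ a ∈ Icc (-δ) δ, ∀ b ∈ Icc (-δ) δ,
            (|((δ₁ - a) / 2) * (f (m + δ₁) + f (m + a)) - ∫ v in (m + a)..(m + δ₁), f v| +
             |((b + δ₂) / 2) * (f (m + b) + f (m - δ₂)) - ∫ v in (m - δ₂)..(m + b), f v| +
             |((δ₁ + δ₂) / 2) * (f (m + δ₁) + f (m - δ₂)) - ∫ v in (m - δ₂)..(m + δ₁), f v|)
              / ((f (m + δ₁) - f m) / δ₁ - fm) < ε :=
  key_triple_limit_general f m δ₀ hsub hf hconv fm hfm
end

section
/- Let f be Lipschitz on [-1,1], m ∈ (-1,1), δ₁, δ₂ > 0 with m+δ₁, m−δ₂ ∈ [-1,1]. Let x₀ ∈ 𝕋 = ℝ/ℤ, set ℓ := δ₂/(δ₁+δ₂), and define R(a,b) := (f(m+a)−f(m+b))/(a−b). Assume R(δ₁,0) − R(0,−δ₂) > 0 and let τ := 1/(R(δ₁,0) − R(0,−δ₂)). Define u : [0,τ] × 𝕋 → [-1,1] by: u(t,x) = m if |x − (R(δ₁,0)+R(0,−δ₂))t/2| ≤ (R(δ₁,0)−R(0,−δ₂))t/2; u(t,x)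 = m+δ₁ if |x − ℓ/2 − (R(δ₁,0)+R(δ₁,−δ₂))t/2| ≤ ℓ/2 − (R(δ₁,0)−R(δ₁,−δ₂))t/2; and u(t,x) = m−δ₂ otherwise (all distances on the torus). Then u is a weak solution of u_t + f(u)_x = 0 on (0,τ)×𝕋, u(0,·) equals the two-valued datum u_d (equal to m+δ₁ on an arc of length ℓ around x₀ shifted appropriately and m−δ₂ elsewhere), and u(τ,·) ≡ m. In particular ∫_𝕋 u(t,x) dx = m for all t. -/
open Set MeasureTheory

section TSCHelpers

lemma tsc_int_gap (k : ℤ) {w r : ℝ} (h1 : r < w) (h2 : w < 1 - r) : ¬ |w - k| ≤ r := by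
  intro h
  rw [abs_le] at h
  have hk0 : (0:ℝ) < (k:ℝ) := by linarith
  have hk1 : (k:ℝ) < 1 := by linarith
  have : (0:ℤ) < k := by exact_mod_cast hk0
  have : k < 1 := by exact_mod_cast hk1
  omega

lemma tsc_dist_coe (x y : ℝ) :
    dist (↑x : AddCircle (1:ℝ)) (↑y) = |x - y - round (x - y)| := by
  rw [dist_eq_norm]
  have : (↑x - ↑y : AddCircle (1:ℝ)) = ((x - y : ℝ) : AddCircle (1:ℝ)) := by norm_cast
  rw [this, AddCircle.norm_eq]
  norm_num

lemma tsc_round_zero {w r : ℝ} (h : |w| ≤ r) (hr : r < 1/2) : round w = 0 := by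
  rw [round_eq_zero_iff]
  rw [abs_le] at h
  constructor <;> [linarith; exact lt_of_le_of_lt h.2 hr]

lemma tsc_dist_le {x y r : ℝ} (h : |x - y| ≤ r) (hr : r < 1/2) :
    dist (↑x : AddCircle (1:ℝ)) (↑y) ≤ r := by
  rw [tsc_dist_coe, tsc_round_zero h hr]
  simpa using h

lemma tsc_dist_not_le {x y r : ℝ} (h1 : r < x - y) (h2 : x - y < 1 - r) :
    ¬ dist (↑x : AddCircle (1:ℝ)) (↑y) ≤ r := by
  rw [tsc_dist_coe]
  exact tsc_int_gap _ h1 h2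

lemma tsc_mem_uIoc_abs {a b x : ℝ} (hx : x ∈ Set.uIoc a b) : |x - a| ≤ |b - a| := by
  rw [Set.mem_uIoc] at hx
  rcases hx with ⟨h1, h2⟩ | ⟨h1, h2⟩
  · rw [abs_of_pos (by linarith)]
    calc x - a ≤ b - a := by linarith
    _ ≤ |b - a| := le_abs_self _
  · rw [abs_of_nonpos (by linarith)]
    calc -(x - a) ≤ a - b := by linarith
    _ ≤ |a - b| := le_abs_self _
    _ = |b - a| := abs_sub_comm _ _

lemma tsc_bdry (φ : ℝ → ℝ → ℝ) (hφc : Continuous fun p : ℝ × ℝ => φ p.1 p.2)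
    (β q t₀ : ℝ) :
    HasDerivAt (fun t => ∫ x in (β + q * t₀)..(β + q * t), φ t x)
      (q * φ t₀ (β + q * t₀)) t₀ := by
  set β₀ := β + q * t₀ with hβ₀
  rw [hasDerivAt_iff_isLittleO, Asymptotics.isLittleO_iff]
  intro c hc
  have hq1 : (0:ℝ) < |q| + 1 := by positivity
  have hcq : 0 < c / (|q| + 1) := by positivity
  obtain ⟨δ, hδ, hδc⟩ := Metric.continuousAt_iff.1 (hφc.continuousAt (x := (t₀, β₀))) _ hcq
  rw [Metric.eventually_nhds_iff]
  refine ⟨δ / (|q| + 1), by positivity, fun t ht => ?_⟩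
  have htd : |t - t₀| < δ / (|q| + 1) := by rwa [Real.dist_eq] at ht
  have hδ' : |t - t₀| < δ := lt_of_lt_of_le htd (by
    rw [div_le_iff₀ hq1] at *
    nlinarith [abs_nonneg (t - t₀), abs_nonneg q, le_abs_self δ, abs_nonneg (t-t₀)])
  have hcont : ∀ x ∈ Set.uIoc β₀ (β + q * t), ‖φ t x - φ t₀ β₀‖ ≤ c / (|q| + 1) := by
    intro x hx
    have hxb : |x - β₀| ≤ |β + q * t - β₀| := tsc_mem_uIoc_abs hx
    have habs : |β + q * t - β₀| = |q| * |t - t₀| := by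
      rw [hβ₀, ← abs_mul]; ring_nf
    have hxd : |x - β₀| < δ := by
      rw [habs] at hxb
      calc |x - β₀| ≤ |q| * |t - t₀| := hxb
      _ < δ := by
        have := (lt_div_iff₀ hq1).1 htd
        nlinarith [abs_nonneg q, abs_nonneg (t - t₀)]
    have h2 : dist ((t, x) : ℝ × ℝ) (t₀, β₀) < δ := by
      rw [Prod.dist_eq]
      simp only [Real.dist_eq]
      exact max_lt hδ' hxd
    have := hδc h2
    rw [Real.dist_eq] at this
    exact le_of_lt this
  have hint : (∫ x in β₀..(β + q * t), φ t x) - (∫ x in β₀..β₀, φ t₀ x)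
      - (t - t₀) • (q * φ t₀ β₀) = ∫ x in β₀..(β + q * t), (φ t x - φ t₀ β₀) := by
    have hct : Continuous fun x => φ t x := hφc.comp (continuous_const.prodMk continuous_id)
    rw [intervalIntegral.integral_sub (hct.intervalIntegrable _ _) intervalIntegrable_const]
    rw [intervalIntegral.integral_const, intervalIntegral.integral_same]
    simp only [smul_eq_mul]
    ring
  rw [hint]
  calc ‖∫ x in β₀..(β + q * t), (φ t x - φ t₀ β₀)‖
      ≤ c / (|q| + 1) * |β + q * t - β₀| :=
        intervalIntegral.norm_integral_le_of_norm_le_const hcont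
    _ ≤ c * ‖t - t₀‖ := by
        have habs : |β + q * t - β₀| = |q| * |t - t₀| := by
          rw [hβ₀, ← abs_mul]; ring_nf
        rw [habs, Real.norm_eq_abs]
        rw [div_mul_eq_mul_div, div_le_iff₀ hq1]
        nlinarith [abs_nonneg (t - t₀), abs_nonneg q, hc.le]

lemma tsc_param (φ φt : ℝ → ℝ → ℝ)
    (hφt : ∀ t x, HasDerivAt (fun s => φ s x) (φt t x) t)
    (hφc : Continuous fun p : ℝ × ℝ => φ p.1 p.2)
    (hφtc : Continuous fun p : ℝ × ℝ => φt p.1 p.2)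
    (a b t₀ : ℝ) :
    HasDerivAt (fun t => ∫ x in a..b, φ t x) (∫ x in a..b, φt t₀ x) t₀ := by
  obtain ⟨C, hC⟩ := (IsCompact.exists_bound_of_continuousOn
    ((isCompact_Icc (a := t₀ - 1) (b := t₀ + 1)).prod (isCompact_uIcc (a := a) (b := b)))
    hφtc.continuousOn)
  have key := intervalIntegral.hasDerivAt_integral_of_dominated_loc_of_deriv_le
    (F := fun t x => φ t x) (F' := fun t x => φt t x) (x₀ := t₀) (a := a) (b := b)
    (bound := fun _ => C) (s := Metric.ball t₀ 1) (μ := volume) (Metric.ball_mem_nhds t₀ one_pos)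
    (Filter.Eventually.of_forall fun t =>
      ((hφc.comp (continuous_const.prodMk continuous_id)).aestronglyMeasurable))
    ((hφc.comp (continuous_const.prodMk continuous_id)).intervalIntegrable a b)
    ((hφtc.comp (continuous_const.prodMk continuous_id)).aestronglyMeasurable)
    (Filter.Eventually.of_forall fun x hx s hs => hC (s, x)
      (Set.mk_mem_prod (by
        rw [Metric.mem_ball, Real.dist_eq, abs_lt] at hs
        constructor <;> [linarith [hs.1]; linarith [hs.2]])
        (uIoc_subset_uIcc hx)))
    intervalIntegrable_const
    (Filter.Eventually.of_forall fun x _ s _ => hφt s x)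
  exact key.2

lemma tsc_movint (φ φt : ℝ → ℝ → ℝ)
    (hφt : ∀ t x, HasDerivAt (fun s => φ s x) (φt t x) t)
    (hφc : Continuous fun p : ℝ × ℝ => φ p.1 p.2)
    (hφtc : Continuous fun p : ℝ × ℝ => φt p.1 p.2)
    (α β p q t₀ : ℝ) :
    HasDerivAt (fun t => ∫ x in (α + p * t)..(β + q * t), φ t x)
      ((∫ x in (α + p * t₀)..(β + q * t₀), φt t₀ x)
        + q * φ t₀ (β + q * t₀) - p * φ t₀ (α + p * t₀)) t₀ := by
  have hsplit : (fun t => ∫ x in (α + p * t)..(β + q * t), φ t x)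
      = fun t => (∫ x in (α + p * t₀)..(β + q * t₀), φ t x)
        + (∫ x in (β + q * t₀)..(β + q * t), φ t x)
        - (∫ x in (α + p * t₀)..(α + p * t), φ t x) := by
    funext t
    have hct : Continuous fun x => φ t x := hφc.comp (continuous_const.prodMk continuous_id)
    have h1 := intervalIntegral.integral_add_adjacent_intervals
      (μ := volume) (a := α + p * t) (b := α + p * t₀) (c := β + q * t₀)
      (hct.intervalIntegrable _ _) (hct.intervalIntegrable _ _)
    have h2 := intervalIntegral.integral_add_adjacent_intervals
      (μ := volume) (a := α + p * t) (b := β + q * t₀) (c := β + q * t)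
      (hct.intervalIntegrable _ _) (hct.intervalIntegrable _ _)
    rw [← h2, ← h1, intervalIntegral.integral_symm (f := fun x => φ t x)
      (μ := volume) (α + p * t) (α + p * t₀)]
    ring
  rw [hsplit]
  have d1 := tsc_param φ φt hφt hφc hφtc (α + p * t₀) (β + q * t₀) t₀
  have d2 := tsc_bdry φ hφc β q t₀
  have d3 := tsc_bdry φ hφc α p t₀
  exact (d1.add d2).sub d3

lemma tsc_cont_coe : Continuous fun x : ℝ => (x : AddCircle (1:ℝ)) := continuous_quotient_mk'

end TSCHelpers


/-- Weak solution of `u_t + f(u)_x = 0` on `(0,T) × 𝕋` (1-periodic realization). -/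
def IsWeakSolution (f : ℝ → ℝ) (T : ℝ) (u : ℝ → ℝ → ℝ) : Prop :=
  ∀ φ : ℝ → ℝ → ℝ,
    ContDiff ℝ (⊤ : ℕ∞) (fun p : ℝ × ℝ => φ p.1 p.2) →
    (∀ t x, φ t (x + 1) = φ t x) →
    (∃ K : Set ℝ, IsCompact K ∧ K ⊆ Ioo 0 T ∧ ∀ t ∉ K, ∀ x, φ t x = 0) →
    (∫ t in (0:ℝ)..T, ∫ x in (0:ℝ)..1,
      (u t x * deriv (fun s => φ s x) t + f (u t x) * deriv (fun y => φ t y) x)) = 0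

set_option maxHeartbeats 2000000

/-- the explicit solution of Lemma 7: with Rankine–Hugoniot speeds
`R₁ = R(δ₁,0)`, `R₂ = R(0,−δ₂)`, `R₃ = R(δ₁,−δ₂)`, `ℓ = δ₂/(δ₁+δ₂)`,
`τ = 1/(R₁−R₂)`, the piecewise constant function `u` (defined through torus
distances, i.e. distances in `AddCircle 1`) taking the value `m` on the growing
middle fan, `m+δ₁` on the shrinking arc, and `m−δ₂` elsewhere, is a weak solution of
`u_t + f(u)_x = 0` on `(0,τ)×𝕋`, `u(0,·)` is a.e. the two-valued datum `u_d`,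
`u(τ,·) ≡ m`, `u` takes values in `[-1,1]`, and `∫_𝕋 u(t,x) dx = m` for `t ∈ [0,τ]`. -/
theorem two_shock_connection
    (f : ℝ → ℝ) (L : NNReal) (hf : LipschitzOnWith L f (Icc (-1) 1))
    (m δ₁ δ₂ : ℝ) (hm : m ∈ Ioo (-1:ℝ) 1)
    (hδ₁ : 0 < δ₁) (hδ₂ : 0 < δ₂) (hup : m + δ₁ ≤ 1) (hdown : -1 ≤ m - δ₂)
    (R₁ R₂ R₃ ℓ τ : ℝ)
    (hR₁ : R₁ = (f (m + δ₁) - f m) / δ₁)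
    (hR₂ : R₂ = (f m - f (m - δ₂)) / δ₂)
    (hR₃ : R₃ = (f (m + δ₁) - f (m - δ₂)) / (δ₁ + δ₂))
    (hℓ : ℓ = δ₂ / (δ₁ + δ₂))
    (hgap : 0 < R₁ - R₂) (hτ : τ = 1 / (R₁ - R₂))
    (u : ℝ → ℝ → ℝ)
    (hu : ∀ t x, u t x =
      if dist ((x : AddCircle (1:ℝ))) ((((R₁ + R₂) * t / 2 : ℝ) : AddCircle (1:ℝ)))
          ≤ (R₁ - R₂) * t / 2 then m
      else if dist ((x : AddCircle (1:ℝ)))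
          (((ℓ / 2 + (R₁ + R₃) * t / 2 : ℝ) : AddCircle (1:ℝ)))
          ≤ ℓ / 2 - (R₁ - R₃) * t / 2 then m + δ₁
      else m - δ₂) :
    IsWeakSolution f τ u ∧
    (∀ᵐ x ∂(volume.restrict (Ioc (0:ℝ) 1)),
      u 0 x = if dist ((x : AddCircle (1:ℝ))) (((ℓ / 2 : ℝ) : AddCircle (1:ℝ))) < ℓ / 2
        then m + δ₁ else m - δ₂) ∧
    (∀ x, u τ x = m) ∧
    (∀ t x, u t x ∈ Icc (-1:ℝ) 1) ∧
    (∀ t ∈ Icc (0:ℝ) τ, ∫ x in (0:ℝ)..1, u t x = m) := by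
  have hδ12 : 0 < δ₁ + δ₂ := by linarith
  have hfm1 : f (m + δ₁) - f m = δ₁ * R₁ := by rw [hR₁]; field_simp
  have hfm2 : f m - f (m - δ₂) = δ₂ * R₂ := by rw [hR₂]; field_simp
  have hfm3 : f (m + δ₁) - f (m - δ₂) = (δ₁ + δ₂) * R₃ := by rw [hR₃]; field_simp
  have hℓδ : ℓ * (δ₁ + δ₂) = δ₂ := by rw [hℓ]; field_simp
  have hℓpos : 0 < ℓ := by rw [hℓ]; positivity
  have hℓlt : ℓ < 1 := by rw [hℓ]; rw [div_lt_one hδ12]; linarith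
  have hτpos : 0 < τ := by rw [hτ]; positivity
  have hτ1 : (R₁ - R₂) * τ = 1 := by rw [hτ]; field_simp
  have hR3sum : (δ₁ + δ₂) * R₃ = δ₁ * R₁ + δ₂ * R₂ := by linarith
  have hR13 : R₁ - R₃ = ℓ * (R₁ - R₂) := by
    apply mul_left_cancel₀ hδ12.ne'
    linear_combination -hR3sum - (R₁ - R₂) * hℓδ
  have hR32 : R₃ - R₂ = (1 - ℓ) * (R₁ - R₂) := by linear_combination -hR13
  -- shape lemma
  have shape : ∀ t, 0 ≤ t → t < τ → ∀ y, R₂ * t ≤ y → y < R₂ * t + 1 →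
      u t y = if y ≤ R₁ * t then m else if y ≤ ℓ + R₃ * t then m + δ₁ else m - δ₂ := by
    intro t ht0 ht1 y hy0 hy1
    have hs0 : 0 ≤ (R₁ - R₂) * t := mul_nonneg hgap.le ht0
    have hs1 : (R₁ - R₂) * t < 1 := by
      calc (R₁ - R₂) * t < (R₁ - R₂) * τ := by exact mul_lt_mul_of_pos_left ht1 hgap
      _ = 1 := hτ1
    have hr13t : 0 ≤ (R₁ - R₃) * t := by
      have h1 := mul_nonneg (mul_nonneg hℓpos.le hgap.le) ht0
      have h2 : (R₁ - R₃) * t = ℓ * (R₁ - R₂) * t := by linear_combination t * hR13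
      linarith
    rw [hu]
    by_cases h1 : y ≤ R₁ * t
    · rw [if_pos, if_pos h1]
      apply tsc_dist_le
      · rw [abs_le]; constructor <;> linarith
      · linarith
    · rw [if_neg (tsc_dist_not_le (by push_neg at h1; linarith) (by linarith)), if_neg h1]
      push_neg at h1
      by_cases h2 : y ≤ ℓ + R₃ * t
      · rw [if_pos, if_pos h2]
        apply tsc_dist_le
        · rw [abs_le]; constructor <;> linarith
        · linarith
      · rw [if_neg (tsc_dist_not_le (by push_neg at h2; linarith) (by linarith)), if_neg h2]
  have huper : ∀ t, Function.Periodic (u t) 1 := by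
    intro t x
    rw [hu, hu, show ((x + 1 : ℝ) : AddCircle (1:ℝ)) = (x : AddCircle (1:ℝ)) from
      AddCircle.coe_add_period 1 x]
  have hmeas : ∀ t, Measurable (u t) := by
    intro t
    rw [show u t = (fun x : ℝ =>
      if dist ((x : AddCircle (1:ℝ))) ((((R₁ + R₂) * t / 2 : ℝ) : AddCircle (1:ℝ)))
          ≤ (R₁ - R₂) * t / 2 then m
      else if dist ((x : AddCircle (1:ℝ)))
          (((ℓ / 2 + (R₁ + R₃) * t / 2 : ℝ) : AddCircle (1:ℝ)))
          ≤ ℓ / 2 - (R₁ - R₃) * t / 2 then m + δ₁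
      else m - δ₂) from funext (hu t)]
    refine Measurable.ite ?_ measurable_const (Measurable.ite ?_ measurable_const
      measurable_const) <;>
    · apply measurableSet_le (Continuous.measurable ?_) measurable_const
      exact tsc_cont_coe.dist continuous_const
  have hbdd : ∀ t x, ‖u t x‖ ≤ |m| + δ₁ + δ₂ := by
    intro t x
    rw [hu, Real.norm_eq_abs]
    split_ifs with h1 h2
    · linarith [abs_nonneg m]
    · calc |m + δ₁| ≤ |m| + |δ₁| := abs_add_le _ _
        _ ≤ |m| + δ₁ + δ₂ := by rw [abs_of_pos hδ₁]; linarith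
    · calc |m - δ₂| ≤ |m| + |δ₂| := abs_sub _ _
        _ ≤ |m| + δ₁ + δ₂ := by rw [abs_of_pos hδ₂]; linarith
  have hInt : ∀ t a b, IntervalIntegrable (u t) volume a b := by
    intro t a b
    exact IntervalIntegrable.mono_fun' (g := fun _ => |m| + δ₁ + δ₂) intervalIntegrable_const
      ((hmeas t).aestronglyMeasurable) (Filter.Eventually.of_forall (hbdd t))
  have hfinal : ∀ x, u τ x = m := by
    intro x
    rw [hu]
    rw [if_pos]
    have h12 : (R₁ - R₂) * τ / 2 = 1 / 2 := by rw [hτ1]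
    rw [h12, dist_eq_norm]
    have := AddCircle.norm_le_half_period (p := (1:ℝ))
      (x := (x : AddCircle (1:ℝ)) - (((R₁ + R₂) * τ / 2 : ℝ) : AddCircle (1:ℝ))) one_ne_zero
    simpa using this
  have hws : IsWeakSolution f τ u := by
    intro φ hφ hper hsupp
    obtain ⟨K, hKc, hKsub, hK0⟩ := hsupp
    have hψc : Continuous (fun p : ℝ × ℝ => φ p.1 p.2) := hφ.continuous
    have hψd : Differentiable ℝ (fun p : ℝ × ℝ => φ p.1 p.2) := hφ.differentiable (by simp)
    set φt : ℝ → ℝ → ℝ := fun t x => (fderiv ℝ (fun p : ℝ × ℝ => φ p.1 p.2) (t, x)) (1, 0)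
      with hφtdef
    have hd1 : ∀ t x, HasDerivAt (fun s => φ s x) (φt t x) t := by
      intro t x
      have h2 : HasDerivAt (fun s : ℝ => (s, x)) ((1 : ℝ), (0 : ℝ)) t :=
        (hasDerivAt_id t).prodMk (hasDerivAt_const t x)
      exact (hψd (t, x)).hasFDerivAt.comp_hasDerivAt t h2
    have hderiv_t : ∀ t x, deriv (fun s => φ s x) t = φt t x := fun t x => (hd1 t x).deriv
    have hφtc : Continuous fun p : ℝ × ℝ => φt p.1 p.2 := by
      have h := hφ.continuous_fderiv (by simp)
      exact h.clm_apply continuous_const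
    have hφtt : ∀ t, Continuous (φt t) := fun t =>
      hφtc.comp (continuous_const.prodMk continuous_id)
    have hφcx : ∀ t, ContDiff ℝ (⊤ : ℕ∞) (fun y => φ t y) := fun t =>
      hφ.comp ((contDiff_const (c := t)).prodMk contDiff_id)
    have hφx_cont : ∀ t, Continuous (deriv (fun y => φ t y)) := fun t =>
      (hφcx t).continuous_deriv (by simp)
    have hFTC : ∀ t p q, (∫ x in p..q, deriv (fun y => φ t y) x) = φ t q - φ t p := by
      intro t p q
      exact intervalIntegral.integral_deriv_eq_sub
        (fun x _ => ((hφcx t).differentiable (by simp)).differentiableAt)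
        (((hφx_cont t)).intervalIntegrable _ _)
    have hφ0 : ∀ x, φ 0 x = 0 := hK0 0 (fun h => lt_irrefl 0 (hKsub h).1)
    have hφτ : ∀ x, φ τ x = 0 := hK0 τ (fun h => lt_irrefl τ (hKsub h).2)
    set g : ℝ → ℝ := fun t =>
      m * (∫ x in (0 + R₂ * t)..(0 + R₁ * t), φ t x)
      + (m + δ₁) * (∫ x in (0 + R₁ * t)..(ℓ + R₃ * t), φ t x)
      + (m - δ₂) * (∫ x in (ℓ + R₃ * t)..(1 + R₂ * t), φ t x) with hgdef
    set G : ℝ → ℝ := fun t =>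
      m * ((∫ x in (0 + R₂ * t)..(0 + R₁ * t), φt t x)
            + R₁ * φ t (0 + R₁ * t) - R₂ * φ t (0 + R₂ * t))
      + (m + δ₁) * ((∫ x in (0 + R₁ * t)..(ℓ + R₃ * t), φt t x)
            + R₃ * φ t (ℓ + R₃ * t) - R₁ * φ t (0 + R₁ * t))
      + (m - δ₂) * ((∫ x in (ℓ + R₃ * t)..(1 + R₂ * t), φt t x)
            + R₂ * φ t (1 + R₂ * t) - R₃ * φ t (ℓ + R₃ * t)) with hGdef
    have hg : ∀ t, HasDerivAt g (G t) t := fun t =>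
      (((tsc_movint φ φt hd1 hψc hφtc 0 0 R₂ R₁ t).const_mul m).add
        ((tsc_movint φ φt hd1 hψc hφtc 0 ℓ R₁ R₃ t).const_mul (m + δ₁))).add
        ((tsc_movint φ φt hd1 hψc hφtc ℓ 1 R₃ R₂ t).const_mul (m - δ₂))
    have hmov : ∀ (aa pp bb qq : ℝ),
        Continuous (fun t => ∫ x in (aa + pp * t)..(bb + qq * t), φt t x) := by
      intro aa pp bb qq
      have hrepr : (fun t => ∫ x in (aa + pp * t)..(bb + qq * t), φt t x)
          = fun t => (∫ x in (0:ℝ)..(bb + qq * t), φt t x)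
            - (∫ x in (0:ℝ)..(aa + pp * t), φt t x) := by
        funext t
        rw [← intervalIntegral.integral_add_adjacent_intervals
          (a := aa + pp * t) (b := 0) (c := bb + qq * t)
          ((hφtt t).intervalIntegrable _ _) ((hφtt t).intervalIntegrable _ _),
          intervalIntegral.integral_symm]
        ring
      rw [hrepr]
      exact (intervalIntegral.continuous_parametric_intervalIntegral_of_continuous (f := φt) (μ := volume)
          hφtc (continuous_const.add (continuous_const.mul continuous_id))).sub
        (intervalIntegral.continuous_parametric_intervalIntegral_of_continuous (f := φt) (μ := volume)
          hφtc (continuous_const.add (continuous_const.mul continuous_id)))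
    have hφtcomp : ∀ (bb qq : ℝ), Continuous (fun t => φ t (bb + qq * t)) := fun bb qq =>
      hψc.comp (continuous_id.prodMk
        (continuous_const.add (continuous_const.mul continuous_id)))
    have hGc : Continuous G := by
      rw [hGdef]
      exact ((continuous_const.mul (((hmov 0 R₂ 0 R₁).add
          (continuous_const.mul (hφtcomp 0 R₁))).sub
          (continuous_const.mul (hφtcomp 0 R₂)))).add
        (continuous_const.mul (((hmov 0 R₁ ℓ R₃).add
          (continuous_const.mul (hφtcomp ℓ R₃))).sub
          (continuous_const.mul (hφtcomp 0 R₁))))).add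
        (continuous_const.mul (((hmov ℓ R₃ 1 R₂).add
          (continuous_const.mul (hφtcomp 1 R₂))).sub
          (continuous_const.mul (hφtcomp ℓ R₃))))
    have key : ∀ t, 0 < t → t < τ →
        (∫ x in (0:ℝ)..1, (u t x * deriv (fun s => φ s x) t
          + f (u t x) * deriv (fun y => φ t y) x)) = G t := by
      intro t ht0 ht1
      have hs1 : (R₁ - R₂) * t < 1 := by
        calc (R₁ - R₂) * t < (R₁ - R₂) * τ := mul_lt_mul_of_pos_left ht1 hgap
        _ = 1 := hτ1
      have hs0 : 0 ≤ (R₁ - R₂) * t := mul_nonneg hgap.le ht0.le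
      have e2 : ℓ + R₃ * t - R₁ * t = ℓ * (1 - (R₁ - R₂) * t) := by
        linear_combination (-t) * hR13
      have e3 : R₂ * t + 1 - (ℓ + R₃ * t) = (1 - ℓ) * (1 - (R₁ - R₂) * t) := by
        linear_combination (-t) * hR32
      have hAB : R₂ * t ≤ R₁ * t := by linarith
      have hBC : R₁ * t ≤ ℓ + R₃ * t := by
        nlinarith [mul_nonneg hℓpos.le (by linarith : (0:ℝ) ≤ 1 - (R₁ - R₂) * t)]
      have hCA : ℓ + R₃ * t < R₂ * t + 1 := by
        nlinarith [mul_pos (by linarith : (0:ℝ) < 1 - ℓ)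
          (by linarith : (0:ℝ) < 1 - (R₁ - R₂) * t)]
      have hinteq : (fun x => u t x * deriv (fun s => φ s x) t
          + f (u t x) * deriv (fun y => φ t y) x)
          = fun x => u t x * φt t x + f (u t x) * deriv (fun y => φ t y) x := by
        funext x; rw [hderiv_t]
      rw [hinteq]
      set F : ℝ → ℝ := fun x => u t x * φt t x + f (u t x) * deriv (fun y => φ t y) x
        with hFdef
      have hFper : Function.Periodic F 1 := by
        intro x
        have h1 : u t (x + 1) = u t x := huper t x
        have h2 : φt t (x + 1) = φt t x := by
          rw [← hderiv_t t (x + 1), ← hderiv_t t x]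
          congr 1
          funext s
          exact hper s x
        have h3 : deriv (fun y => φ t y) (x + 1) = deriv (fun y => φ t y) x := by
          have heq : (fun y => φ t (y + 1)) = fun y => φ t y := funext fun y => hper t y
          calc deriv (fun y => φ t y) (x + 1) = deriv (fun y => φ t (y + 1)) x :=
            (deriv_comp_add_const _ _ _).symm
          _ = deriv (fun y => φ t y) x := by rw [heq]
        simp only [hFdef]
        rw [h1, h2, h3]
      have hfu : (fun x => f (u t x)) = (fun x : ℝ =>
          if dist ((x : AddCircle (1:ℝ))) ((((R₁ + R₂) * t / 2 : ℝ) : AddCircle (1:ℝ)))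
              ≤ (R₁ - R₂) * t / 2 then f m
          else if dist ((x : AddCircle (1:ℝ)))
              (((ℓ / 2 + (R₁ + R₃) * t / 2 : ℝ) : AddCircle (1:ℝ)))
              ≤ ℓ / 2 - (R₁ - R₃) * t / 2 then f (m + δ₁)
          else f (m - δ₂)) := by
        funext x; rw [hu]; split_ifs <;> rfl
      have hfum : Measurable fun x => f (u t x) := by
        rw [hfu]
        refine Measurable.ite ?_ measurable_const
          (Measurable.ite ?_ measurable_const measurable_const) <;>
        · exact measurableSet_le
            (Continuous.measurable (tsc_cont_coe.dist continuous_const)) measurable_const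
      have hfub : ∀ x, ‖f (u t x)‖ ≤ |f m| + |f (m + δ₁)| + |f (m - δ₂)| := by
        intro x
        rw [hu, Real.norm_eq_abs]
        split_ifs with h1 h2
        · linarith [abs_nonneg (f (m + δ₁)), abs_nonneg (f (m - δ₂))]
        · linarith [abs_nonneg (f m), abs_nonneg (f (m - δ₂))]
        · linarith [abs_nonneg (f m), abs_nonneg (f (m + δ₁))]
      have hIntF : ∀ a b, IntervalIntegrable F volume a b := by
        intro a b
        apply IntervalIntegrable.add
        · apply IntervalIntegrable.mono_fun'
            (g := fun x => (|m| + δ₁ + δ₂) * |φt t x|)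
            ((continuous_const.mul (hφtt t).abs).intervalIntegrable _ _)
            (((hmeas t).mul (hφtt t).measurable).aestronglyMeasurable)
          apply Filter.Eventually.of_forall
          intro x
          simp only [Real.norm_eq_abs, Pi.mul_apply, abs_mul]
          have hb := hbdd t x
          rw [Real.norm_eq_abs] at hb
          exact mul_le_mul_of_nonneg_right hb (abs_nonneg _)
        · apply IntervalIntegrable.mono_fun'
            (g := fun x => (|f m| + |f (m + δ₁)| + |f (m - δ₂)|) * |deriv (fun y => φ t y) x|)
            ((continuous_const.mul (hφx_cont t).abs).intervalIntegrable _ _)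
            ((hfum.mul (hφx_cont t).measurable).aestronglyMeasurable)
          apply Filter.Eventually.of_forall
          intro x
          simp only [Real.norm_eq_abs, Pi.mul_apply, abs_mul]
          have hb := hfub x
          rw [Real.norm_eq_abs] at hb
          exact mul_le_mul_of_nonneg_right hb (abs_nonneg _)
      have hshiftF : (∫ x in (0:ℝ)..1, F x) = ∫ x in (R₂ * t)..(R₂ * t + 1), F x := by
        have h := hFper.intervalIntegral_add_eq 0 (R₂ * t)
        simpa using h
      rw [hshiftF,
        ← intervalIntegral.integral_add_adjacent_intervals
          (a := R₂ * t) (b := ℓ + R₃ * t) (c := R₂ * t + 1) (hIntF _ _) (hIntF _ _),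
        ← intervalIntegral.integral_add_adjacent_intervals
          (a := R₂ * t) (b := R₁ * t) (c := ℓ + R₃ * t) (hIntF _ _) (hIntF _ _)]
      have q1 : (∫ x in (R₂ * t)..(R₁ * t), F x)
          = m * (∫ x in (R₂ * t)..(R₁ * t), φt t x)
            + f m * (φ t (R₁ * t) - φ t (R₂ * t)) := by
        rw [intervalIntegral.integral_congr_ae
          (g := fun y => m * φt t y + f m * deriv (fun y => φ t y) y) ?_]
        · rw [intervalIntegral.integral_add (f := fun y => m * φt t y)
            (g := fun y => f m * deriv (fun y => φ t y) y)
            ((continuous_const.mul (hφtt t)).intervalIntegrable _ _)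
            ((continuous_const.mul (hφx_cont t)).intervalIntegrable _ _),
            intervalIntegral.integral_const_mul, intervalIntegral.integral_const_mul, hFTC]
        · apply Filter.Eventually.of_forall
          intro y hy
          rw [Set.uIoc_of_le hAB] at hy
          have hsy := shape t ht0.le ht1 y hy.1.le (by linarith [hy.2])
          rw [if_pos hy.2] at hsy
          simp only [hFdef, hsy]
      have q2 : (∫ x in (R₁ * t)..(ℓ + R₃ * t), F x)
          = (m + δ₁) * (∫ x in (R₁ * t)..(ℓ + R₃ * t), φt t x)
            + f (m + δ₁) * (φ t (ℓ + R₃ * t) - φ t (R₁ * t)) := by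
        rw [intervalIntegral.integral_congr_ae
          (g := fun y => (m + δ₁) * φt t y + f (m + δ₁) * deriv (fun y => φ t y) y) ?_]
        · rw [intervalIntegral.integral_add (f := fun y => (m + δ₁) * φt t y)
            (g := fun y => f (m + δ₁) * deriv (fun y => φ t y) y)
            ((continuous_const.mul (hφtt t)).intervalIntegrable _ _)
            ((continuous_const.mul (hφx_cont t)).intervalIntegrable _ _),
            intervalIntegral.integral_const_mul, intervalIntegral.integral_const_mul, hFTC]
        · apply Filter.Eventually.of_forall
          intro y hy
          rw [Set.uIoc_of_le hBC] at hy
          have hsy := shape t ht0.le ht1 y (by linarith [hy.1]) (by linarith [hy.2])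
          rw [if_neg (by push_neg; exact hy.1), if_pos hy.2] at hsy
          simp only [hFdef, hsy]
      have hane : ∀ᵐ (y : ℝ) ∂(volume : Measure ℝ), y ≠ R₂ * t + 1 := by
        rw [MeasureTheory.ae_iff]
        refine measure_mono_null (t := {y | y = R₂ * t + 1}) (fun y hy => ?_) ?_
        · simpa only [Set.mem_setOf_eq, not_not, ne_eq] using hy
        · rw [Set.setOf_eq_eq_singleton]; exact measure_singleton _
      have q3 : (∫ x in (ℓ + R₃ * t)..(R₂ * t + 1), F x)
          = (m - δ₂) * (∫ x in (ℓ + R₃ * t)..(R₂ * t + 1), φt t x)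
            + f (m - δ₂) * (φ t (R₂ * t + 1) - φ t (ℓ + R₃ * t)) := by
        rw [intervalIntegral.integral_congr_ae
          (g := fun y => (m - δ₂) * φt t y + f (m - δ₂) * deriv (fun y => φ t y) y) ?_]
        · rw [intervalIntegral.integral_add (f := fun y => (m - δ₂) * φt t y)
            (g := fun y => f (m - δ₂) * deriv (fun y => φ t y) y)
            ((continuous_const.mul (hφtt t)).intervalIntegrable _ _)
            ((continuous_const.mul (hφx_cont t)).intervalIntegrable _ _),
            intervalIntegral.integral_const_mul, intervalIntegral.integral_const_mul, hFTC]
        · filter_upwards [hane] with y hyne hy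
          rw [Set.uIoc_of_le hCA.le] at hy
          have hsy := shape t ht0.le ht1 y (by linarith [hy.1])
            (lt_of_le_of_ne hy.2 hyne)
          rw [if_neg (by push_neg; linarith [hy.1]),
            if_neg (by push_neg; exact hy.1)] at hsy
          simp only [hFdef, hsy]
      rw [q1, q2, q3]
      have hA1 : φ t (1 + R₂ * t) = φ t (R₂ * t) := by
        rw [show (1 : ℝ) + R₂ * t = R₂ * t + 1 by ring]
        exact hper t (R₂ * t)
      simp only [hGdef, zero_add]
      rw [hA1, show R₂ * t + 1 = 1 + R₂ * t by ring, hA1]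
      linear_combination (-(φ t (R₂ * t))) * hfm2 - (φ t (R₁ * t)) * hfm1
        + (φ t (ℓ + R₃ * t)) * hfm3
    have hτne : ∀ᵐ (s : ℝ) ∂(volume : Measure ℝ), s ≠ τ := by
      rw [MeasureTheory.ae_iff]
      refine measure_mono_null (t := {s | s = τ}) (fun y hy => ?_) ?_
      · simpa only [Set.mem_setOf_eq, not_not, ne_eq] using hy
      · rw [Set.setOf_eq_eq_singleton]; exact measure_singleton _
    rw [intervalIntegral.integral_congr_ae (g := G) ?_]
    · rw [intervalIntegral.integral_eq_sub_of_hasDerivAt (fun s _ => hg s)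
        (hGc.intervalIntegrable _ _)]
      have hz : ∀ s, (∀ x, φ s x = 0) → g s = 0 := by
        intro s hzero
        have hzi : ∀ (aa bb : ℝ), (∫ x in aa..bb, φ s x) = 0 := by
          intro aa bb
          rw [show (fun x => φ s x) = fun _ => (0:ℝ) from funext hzero]
          simp
        simp only [hgdef]
        rw [hzi, hzi, hzi]
        ring
      rw [hz τ hφτ, hz 0 hφ0]
      ring
    · filter_upwards [hτne] with s hsne hsmem
      rw [Set.uIoc_of_le hτpos.le] at hsmem
      exact key s hsmem.1 (lt_of_le_of_ne hsmem.2 hsne)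
  refine ⟨hws, ?_, hfinal, ?_, ?_⟩
  · -- initial datum a.e.
    have hz : (volume.restrict (Ioc (0:ℝ) 1)) ({1, ℓ} : Set ℝ) = 0 := by
      have h1 : (volume.restrict (Ioc (0:ℝ) 1)) ({1, ℓ} : Set ℝ) ≤ volume ({1, ℓ} : Set ℝ) :=
        Measure.restrict_le_self _
      have h2 : volume ({1, ℓ} : Set ℝ) = 0 := by
        apply le_antisymm _ zero_le
        calc volume ({1, ℓ} : Set ℝ) ≤ volume ({1} : Set ℝ) + volume ({ℓ} : Set ℝ) :=
          measure_union_le _ _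
        _ = 0 := by simp
      exact le_antisymm (h2 ▸ h1) zero_le
    have hae : ∀ᵐ x ∂(volume.restrict (Ioc (0:ℝ) 1)), x ≠ 1 ∧ x ≠ ℓ := by
      rw [MeasureTheory.ae_iff]
      refine measure_mono_null (fun y hy => ?_) hz
      simp only [Set.mem_setOf_eq, not_and_or, not_not, ne_eq] at hy
      simp only [Set.mem_insert_iff, Set.mem_singleton_iff]
      tauto
    have hmem : ∀ᵐ x ∂(volume.restrict (Ioc (0:ℝ) 1)), x ∈ Ioc (0:ℝ) 1 :=
      ae_restrict_mem measurableSet_Ioc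
    filter_upwards [hae, hmem] with x hx hxm
    obtain ⟨hx1, hxℓ⟩ := hx
    obtain ⟨hx0, hxle⟩ := hxm
    have hxlt : x < 1 := lt_of_le_of_ne hxle hx1
    rw [hu]
    rw [show (R₁ + R₂) * 0 / 2 = (0:ℝ) by ring, show (R₁ - R₂) * 0 / 2 = (0:ℝ) by ring,
      show ℓ / 2 + (R₁ + R₃) * 0 / 2 = ℓ / 2 by ring, show ℓ / 2 - (R₁ - R₃) * 0 / 2 = ℓ / 2 by ring]
    rw [if_neg (tsc_dist_not_le (by linarith) (by linarith))]
    by_cases hxl : x < ℓ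
    · rw [if_pos (tsc_dist_le (by rw [abs_le]; constructor <;> linarith) (by linarith)), if_pos]
      rw [tsc_dist_coe, tsc_round_zero (by rw [abs_le]; constructor <;> linarith)
        (by linarith : ℓ/2 < 1/2)]
      rw [abs_lt]
      constructor <;> simp <;> linarith
    · push_neg at hxl
      have hxl' : ℓ < x := lt_of_le_of_ne hxl (Ne.symm hxℓ)
      rw [if_neg (tsc_dist_not_le (by linarith) (by linarith)), if_neg]
      intro hlt
      exact tsc_dist_not_le (x := x) (y := ℓ/2) (by linarith) (by linarith) hlt.le
  · intro t x
    rw [hu]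
    obtain ⟨hm1, hm2⟩ := hm
    simp only [Set.mem_Icc]
    split_ifs <;> constructor <;> linarith
  · -- mass conservation
    intro t ht
    rcases eq_or_lt_of_le ht.2 with heq | hlt
    · rw [heq]
      rw [intervalIntegral.integral_congr (g := fun _ => m) (fun y _ => hfinal y)]
      simp
    · have ht0 := ht.1
      have hs1 : (R₁ - R₂) * t < 1 := by
        calc (R₁ - R₂) * t < (R₁ - R₂) * τ := mul_lt_mul_of_pos_left hlt hgap
        _ = 1 := hτ1
      have hs0 : 0 ≤ (R₁ - R₂) * t := mul_nonneg hgap.le ht0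
      have e2 : ℓ + R₃ * t - R₁ * t = ℓ * (1 - (R₁ - R₂) * t) := by
        linear_combination (-t) * hR13
      have e3 : R₂ * t + 1 - (ℓ + R₃ * t) = (1 - ℓ) * (1 - (R₁ - R₂) * t) := by
        linear_combination (-t) * hR32
      have hAB : R₂ * t ≤ R₁ * t := by linarith
      have hBC : R₁ * t ≤ ℓ + R₃ * t := by nlinarith [mul_nonneg hℓpos.le (by linarith : (0:ℝ) ≤ 1 - (R₁ - R₂) * t)]
      have hCA : ℓ + R₃ * t < R₂ * t + 1 := by
        nlinarith [mul_pos (by linarith : (0:ℝ) < 1 - ℓ) (by linarith : (0:ℝ) < 1 - (R₁ - R₂) * t)]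
      have hBA1 : R₁ * t < R₂ * t + 1 := by linarith
      have hshift : (∫ x in (0:ℝ)..1, u t x) = ∫ x in (R₂ * t)..(R₂ * t + 1), u t x := by
        have := (huper t).intervalIntegral_add_eq 0 (R₂ * t)
        simpa using this
      rw [hshift]
      rw [← intervalIntegral.integral_add_adjacent_intervals
        (a := R₂ * t) (b := ℓ + R₃ * t) (c := R₂ * t + 1) (hInt t _ _) (hInt t _ _),
        ← intervalIntegral.integral_add_adjacent_intervals
        (a := R₂ * t) (b := R₁ * t) (c := ℓ + R₃ * t) (hInt t _ _) (hInt t _ _)]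
      have p1 : (∫ x in (R₂ * t)..(R₁ * t), u t x) = (R₁ * t - R₂ * t) * m := by
        rw [intervalIntegral.integral_congr (g := fun _ => m) ?_, intervalIntegral.integral_const,
          smul_eq_mul]
        intro y hy
        rw [Set.uIcc_of_le hAB] at hy
        rw [shape t ht0 hlt y hy.1 (by linarith [hy.2]), if_pos hy.2]
      have p2 : (∫ x in (R₁ * t)..(ℓ + R₃ * t), u t x) = (ℓ + R₃ * t - R₁ * t) * (m + δ₁) := by
        have hEq : Set.EqOn (u t) (fun _ => m + δ₁) (Ioc (R₁ * t) (ℓ + R₃ * t)) := by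
          intro y hy
          rw [shape t ht0 hlt y (by linarith [hy.1]) (by linarith [hy.2]),
            if_neg (by push_neg; exact hy.1), if_pos hy.2]
        rw [intervalIntegral.integral_of_le hBC,
          MeasureTheory.setIntegral_congr_fun measurableSet_Ioc hEq,
          MeasureTheory.setIntegral_const, Real.volume_real_Ioc_of_le hBC, smul_eq_mul]
      have p3 : (∫ x in (ℓ + R₃ * t)..(R₂ * t + 1), u t x)
          = (R₂ * t + 1 - (ℓ + R₃ * t)) * (m - δ₂) := by
        have hae1 : ∀ᵐ (y : ℝ) ∂(volume.restrict (Ioc (ℓ + R₃ * t) (R₂ * t + 1))),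
            y ≠ R₂ * t + 1 := by
          rw [MeasureTheory.ae_iff]
          refine measure_mono_null (t := {y | y = R₂ * t + 1}) (fun y hy => ?_) ?_
          · simpa only [Set.mem_setOf_eq, not_not, ne_eq] using hy
          · apply le_antisymm _ zero_le
            calc (volume.restrict (Ioc (ℓ + R₃ * t) (R₂ * t + 1))) {y | y = R₂ * t + 1}
                ≤ volume {y | y = R₂ * t + 1} := Measure.restrict_le_self _
            _ = 0 := by rw [Set.setOf_eq_eq_singleton]; exact measure_singleton _
        have hae2 : ∀ᵐ (y : ℝ) ∂(volume.restrict (Ioc (ℓ + R₃ * t) (R₂ * t + 1))),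
            y ∈ Ioc (ℓ + R₃ * t) (R₂ * t + 1) := ae_restrict_mem measurableSet_Ioc
        have hEq : ∀ᵐ (y : ℝ) ∂(volume.restrict (Ioc (ℓ + R₃ * t) (R₂ * t + 1))),
            u t y = m - δ₂ := by
          filter_upwards [hae1, hae2] with y hy1 hy2
          rw [shape t ht0 hlt y (by linarith [hy2.1]) (lt_of_le_of_ne hy2.2 hy1),
            if_neg (by push_neg; linarith [hy2.1]), if_neg (by push_neg; exact hy2.1)]
        rw [intervalIntegral.integral_of_le hCA.le,
          MeasureTheory.integral_congr_ae (g := fun _ => m - δ₂) hEq,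
          MeasureTheory.setIntegral_const, Real.volume_real_Ioc_of_le hCA.le, smul_eq_mul]
      rw [p1, p2, p3]
      linear_combination hℓδ + t * hR3sum
end
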